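/- Let S be the zero-union of finite semigroups S₁, …, Sₙ, with NC the set of indices of non-commutative Sᵢ. If |NC| ≥ 3, or |NC| ≥ 2 and some G(Sᵢ) with i ∈ NC has an edge, then the girth of G(S) is 3. If |NC| = 2 and G(Sᵢ) has no edges for both i ∈ NC, then the girth of G(S) is 4. -/

import Mathlib

open SimpleGraph

/-- The center of a magma/semigroup: elements commuting with everything. -/
def sgCenter (S : Type*) [Mul S] : Set S := {x | ∀ y, x * y = y * x}

/-- The commuting graph of a semigroup: vertices are non-central elements,
distinct vertices adjacent iff they commute. -/
def commGraph (S : Type*) [Mul S] : SimpleGraph {x : S // x ∉ sgCenter S} where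
  Adj x y := x ≠ y ∧ (x : S) * y = (y : S) * x
  symm := ⟨fun x y ⟨h, h'⟩ => ⟨h.symm, h'.symm⟩⟩
  loopless := ⟨fun x ⟨h, _⟩ => h rfl⟩

/-- The extended commuting graph of a semigroup: vertices are all elements,
distinct vertices adjacent iff they commute. -/
def extCommGraph (S : Type*) [Mul S] : SimpleGraph S where
  Adj x y := x ≠ y ∧ x * y = y * x
  symm := ⟨fun x y ⟨h, h'⟩ => ⟨h.symm, h'.symm⟩⟩
  loopless := ⟨fun x ⟨h, _⟩ => h rfl⟩

/-- The graph join of two graphs on disjoint vertex sets. -/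
def graphJoin {V W : Type*} (G : SimpleGraph V) (H : SimpleGraph W) :
    SimpleGraph (V ⊕ W) where
  Adj x y := match x, y with
    | .inl a, .inl b => G.Adj a b
    | .inr a, .inr b => H.Adj a b
    | .inl _, .inr _ => True
    | .inr _, .inl _ => True
  symm := ⟨by rintro (a|a) (b|b) h <;> simp_all [SimpleGraph.Adj.symm]⟩
  loopless := ⟨by rintro (a|a) h; exacts [G.loopless.irrefl a h, H.loopless.irrefl a h]⟩

/-- The graph join of a family of graphs on disjoint vertex sets. -/
def graphJoinFam {ι : Type*} {V : ι → Type*} (G : ∀ i, SimpleGraph (V i)) :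
    SimpleGraph (Σ i, V i) where
  Adj x y := x.1 ≠ y.1 ∨ ∃ a b : V x.1, (G x.1).Adj a b ∧ x = ⟨x.1, a⟩ ∧ y = ⟨x.1, b⟩
  symm := ⟨by
    rintro ⟨i, a⟩ ⟨j, b⟩ (h | ⟨a', b', hadj, h1, h2⟩)
    · exact Or.inl h.symm
    · cases h1; cases h2
      exact Or.inr ⟨b', a, hadj.symm, rfl, rfl⟩⟩
  loopless := ⟨by
    rintro ⟨i, a⟩ (h | ⟨a', b', hadj, h1, h2⟩)
    · exact h rfl
    · cases h1
      cases h2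
      exact (G i).loopless.irrefl _ hadj⟩

/-- The strong product of two simple graphs. -/
def strongProd {V W : Type*} (G : SimpleGraph V) (H : SimpleGraph W) :
    SimpleGraph (V × W) where
  Adj x y := x ≠ y ∧ (x.1 = y.1 ∨ G.Adj x.1 y.1) ∧ (x.2 = y.2 ∨ H.Adj x.2 y.2)
  symm := ⟨fun x y ⟨h, h1, h2⟩ =>
    ⟨h.symm, h1.imp Eq.symm (fun h => G.symm.symm _ _ h), h2.imp Eq.symm (fun h => H.symm.symm _ _ h)⟩⟩
  loopless := ⟨fun x ⟨h, _⟩ => h rfl⟩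

/-- The strong product of a family of simple graphs. -/
def strongProdFam {ι : Type*} {V : ι → Type*} (G : ∀ i, SimpleGraph (V i)) :
    SimpleGraph (∀ i, V i) where
  Adj x y := x ≠ y ∧ ∀ i, x i = y i ∨ (G i).Adj (x i) (y i)
  symm := ⟨fun x y ⟨h, h'⟩ => ⟨h.symm, fun i => (h' i).imp Eq.symm (fun h => (G i).symm.symm _ _ h)⟩⟩
  loopless := ⟨fun x ⟨h, _⟩ => h rfl⟩

/-- `p` is a left path in the commuting graph of `S`. -/
def IsLeftPath {S : Type*} [Mul S] {u v : {x : S // x ∉ sgCenter S}}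
    (p : (commGraph S).Walk u v) : Prop :=
  p.IsPath ∧ u ≠ v ∧ ∀ w ∈ p.support, (u : S) * (w : S) = (v : S) * (w : S)

/-- The commuting graph of `S` contains a left path. -/
def HasLeftPath (S : Type*) [Mul S] : Prop :=
  ∃ (u v : {x : S // x ∉ sgCenter S}) (p : (commGraph S).Walk u v), IsLeftPath p

/-- The knit degree of `S`: the length of a shortest left path in its commuting graph. -/
noncomputable def knitDegree (S : Type*) [Mul S] : ℕ :=
  sInf {m | ∃ (u v : {x : S // x ∉ sgCenter S}) (p : (commGraph S).Walk u v),
    IsLeftPath p ∧ p.length = m}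

/-- `p` is a *-left path in the extended commuting graph of `S`. -/
def IsStarLeftPath {S : Type*} [Mul S] {u v : S}
    (p : (extCommGraph S).Walk u v) : Prop :=
  p.IsPath ∧ u ≠ v ∧ ∀ w ∈ p.support, u * w = v * w

/-- The extended commuting graph of `S` contains a *-left path. -/
def HasStarLeftPath (S : Type*) [Mul S] : Prop :=
  ∃ (u v : S) (p : (extCommGraph S).Walk u v), IsStarLeftPath p

/-- The *-knit degree of `S`. -/
noncomputable def starKnitDegree (S : Type*) [Mul S] : ℕ :=
  sInf {m | ∃ (u v : S) (p : (extCommGraph S).Walk u v), IsStarLeftPath p ∧ p.length = m}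

/-- The zero-union of a family of semigroups: their disjoint union plus a new zero. -/
def ZeroUnion {n : ℕ} (S : Fin n → Type*) : Type _ := Option (Σ i, S i)

instance {n : ℕ} (S : Fin n → Type*) [∀ i, Mul (S i)] : Mul (ZeroUnion S) where
  mul x y := match x, y with
    | some ⟨i, a⟩, some ⟨j, b⟩ =>
      if h : j = i then some ⟨i, a * (h ▸ b)⟩ else none
    | _, _ => none

/-!
Elements of different components multiply to the zero, and the zero is central, so the
non-central elements of the zero-union are exactly the non-central elements of its components and
`G(S)` is the join of the graphs `G(Sᵢ)`. A component contributes vertices iff it is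
noncommutative, and then at least two. Three nonempty parts, or two parts one of which has an
edge, span a triangle. Two edgeless parts of size at least two give a complete bipartite graph
containing a 4-cycle, and no triangle.
-/

namespace SimpleGraph

variable {α : Type*} {G : SimpleGraph α} {a b c d : α}

lemma egirth_eq_three_of_adj (hab : G.Adj a b) (hbc : G.Adj b c) (hca : G.Adj c a) :
    G.egirth = 3 := by
  refine le_antisymm ?_ three_le_egirth
  have hw : (Walk.cons hab (Walk.cons hbc hca.toWalk)).IsCycle := by
    have := hab.ne; have := hbc.ne; have := hca.ne
    simp [Walk.isCycle_def, Walk.isTrail_def]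
    aesop
  simpa using egirth_le_length hw

lemma CliqueFree.four_le_egirth (h : G.CliqueFree 3) : 4 ≤ G.egirth := by
  classical
  rw [le_egirth]
  intro a w hw
  by_contra! hlt
  have hlen : w.length = 3 := by have := hw.three_le_length; norm_cast at hlt; omega
  match w, hlen with
  | .cons hab (.cons hbc (.cons hca .nil)), _ =>
    exact h {a, _, _} (is3Clique_triple_iff.2 ⟨hab, hca.symm, hbc⟩)

lemma egirth_eq_four_of_adj (hab : G.Adj a b) (hbc : G.Adj b c) (hcd : G.Adj c d)
    (hda : G.Adj d a) (hac : a ≠ c) (hbd : b ≠ d) (h : G.CliqueFree 3) : G.egirth = 4 := by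
  refine le_antisymm ?_ h.four_le_egirth
  have hw : (Walk.cons hab (Walk.cons hbc (Walk.cons hcd hda.toWalk))).IsCycle := by
    have := hab.ne; have := hbc.ne; have := hcd.ne; have := hda.ne
    simp [Walk.isCycle_def, Walk.isTrail_def]
    aesop
  simpa using egirth_le_length hw

end SimpleGraph

section graphJoinFam

variable {ι : Type*} {V : ι → Type*} {G : ∀ i, SimpleGraph (V i)}

lemma graphJoinFam_adj_of_ne {i j : ι} (h : i ≠ j) (a : V i) (b : V j) :
    (graphJoinFam G).Adj ⟨i, a⟩ ⟨j, b⟩ :=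
  Or.inl h

@[simp]
lemma graphJoinFam_adj_mk_mk {i : ι} {a b : V i} :
    (graphJoinFam G).Adj ⟨i, a⟩ ⟨i, b⟩ ↔ (G i).Adj a b := by
  refine ⟨?_, fun h => Or.inr ⟨a, b, h, rfl, rfl⟩⟩
  rintro (h | ⟨a', b', h, ha, hb⟩)
  · exact absurd rfl h
  · cases ha; cases hb; exact h

lemma graphJoinFam_fst_ne_of_adj (hG : ∀ i (a b : V i), ¬ (G i).Adj a b)
    {x y : Σ i, V i} (h : (graphJoinFam G).Adj x y) : x.1 ≠ y.1 := by
  obtain ⟨i, a⟩ := x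
  obtain ⟨j, b⟩ := y
  rintro (rfl : i = j)
  exact hG i a b (graphJoinFam_adj_mk_mk.1 h)

lemma egirth_graphJoinFam_of_ne {i j k : ι} (hij : i ≠ j) (hjk : j ≠ k) (hki : k ≠ i)
    (a : V i) (b : V j) (c : V k) : (graphJoinFam G).egirth = 3 :=
  egirth_eq_three_of_adj (graphJoinFam_adj_of_ne hij a b) (graphJoinFam_adj_of_ne hjk b c)
    (graphJoinFam_adj_of_ne hki c a)

lemma egirth_graphJoinFam_of_adj {i j : ι} {a a' : V i} (ha : (G i).Adj a a') (hij : i ≠ j)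
    (b : V j) : (graphJoinFam G).egirth = 3 :=
  egirth_eq_three_of_adj (graphJoinFam_adj_mk_mk.2 ha) (graphJoinFam_adj_of_ne hij a' b)
    (graphJoinFam_adj_of_ne hij.symm b a)

lemma egirth_graphJoinFam_of_forall_not_adj {i j : ι} (hij : i ≠ j) {a a' : V i} (ha : a ≠ a')
    {b b' : V j} (hb : b ≠ b') (hG : ∀ k (u v : V k), ¬ (G k).Adj u v)
    (hV : ∀ x : Σ k, V k, x.1 = i ∨ x.1 = j) : (graphJoinFam G).egirth = 4 := by
  refine egirth_eq_four_of_adj (graphJoinFam_adj_of_ne hij a b)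
    (graphJoinFam_adj_of_ne hij.symm b a') (graphJoinFam_adj_of_ne hij a' b')
    (graphJoinFam_adj_of_ne hij.symm b' a) (by simpa using ha) (by simpa using hb) ?_
  classical
  refine fun s hs => ?_
  obtain ⟨x, y, z, hxy, hxz, hyz, -⟩ := is3Clique_iff.1 hs
  have := graphJoinFam_fst_ne_of_adj hG hxy
  have := graphJoinFam_fst_ne_of_adj hG hxz
  have := graphJoinFam_fst_ne_of_adj hG hyz
  rcases hV x with hx | hx <;> rcases hV y with hy | hy <;> rcases hV z with hz | hz <;>
    simp_all

end graphJoinFam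

lemma nontrivial_notMem_sgCenter {M : Type*} [Mul M] (h : ¬ ∀ x y : M, x * y = y * x) :
    Nontrivial {x : M // x ∉ sgCenter M} := by
  push Not at h
  obtain ⟨a, b, hab⟩ := h
  exact ⟨⟨a, fun h => hab (h b)⟩, ⟨b, fun h => hab (h a).symm⟩,
    fun h => hab (by rw [Subtype.mk.inj h])⟩

namespace ZeroUnion

variable {n : ℕ} {S : Fin n → Type*}

def of (i : Fin n) (a : S i) : ZeroUnion S := some ⟨i, a⟩

lemma of_inj {i : Fin n} {a b : S i} : of i a = of i b ↔ a = b :=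
  ⟨fun h => sigma_mk_injective (Option.some.inj h), congrArg _⟩

variable [∀ i, Mul (S i)]

lemma of_mul_of_self (i : Fin n) (a b : S i) : of i a * of i b = of i (a * b) :=
  dif_pos rfl

lemma of_mul_of_of_ne {i j : Fin n} (h : i ≠ j) (a : S i) (b : S j) : of i a * of j b = none :=
  dif_neg h.symm

lemma none_mem_sgCenter : (none : ZeroUnion S) ∈ sgCenter (ZeroUnion S) := by
  rintro (_ | _) <;> rfl

lemma of_mem_sgCenter_iff {i : Fin n} {a : S i} :
    of i a ∈ sgCenter (ZeroUnion S) ↔ a ∈ sgCenter (S i) := by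
  refine ⟨fun h b => ?_, fun h => ?_⟩
  · simpa only [of_mul_of_self, of_inj] using h (of i b)
  · rintro (_ | ⟨j, b⟩)
    · rfl
    · change of i a * of j b = of j b * of i a
      obtain rfl | hij := eq_or_ne i j
      · rw [of_mul_of_self, of_mul_of_self, h b]
      · rw [of_mul_of_of_ne hij, of_mul_of_of_ne hij.symm]

def noncentralEquiv :
    (Σ i, {a : S i // a ∉ sgCenter (S i)}) ≃
      {x : ZeroUnion S // x ∉ sgCenter (ZeroUnion S)} where
  toFun x := ⟨of x.1 x.2, of_mem_sgCenter_iff.not.2 x.2.2⟩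
  invFun
    | ⟨none, h⟩ => absurd none_mem_sgCenter h
    | ⟨some ⟨i, a⟩, h⟩ => ⟨i, a, of_mem_sgCenter_iff.not.1 h⟩
  left_inv _ := rfl
  right_inv
    | ⟨none, h⟩ => absurd none_mem_sgCenter h
    | ⟨some _, _⟩ => rfl

def commGraphIso :
    graphJoinFam (fun i => commGraph (S i)) ≃g commGraph (ZeroUnion S) where
  toEquiv := noncentralEquiv
  map_rel_iff' := by
    rintro ⟨i, a⟩ ⟨j, b⟩
    obtain rfl | hij := eq_or_ne i j
    · change (_ ∧ of i a.1 * of i b.1 = of i b.1 * of i a.1) ↔ _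
      simp [commGraph, noncentralEquiv, of_mul_of_self, of_inj, Subtype.ext_iff]
    · refine iff_of_true ⟨fun h => hij ?_, ?_⟩
        (graphJoinFam_adj_of_ne (G := fun i => commGraph (S i)) hij a b)
      · exact congrArg Sigma.fst (noncentralEquiv.injective h)
      · change of i a.1 * of j b.1 = of j b.1 * of i a.1
        rw [of_mul_of_of_ne hij, of_mul_of_of_ne hij.symm]

end ZeroUnion

theorem egirth_commGraph_zeroUnion_general {n : ℕ} (S : Fin n → Type*)
    [∀ i, Semigroup (S i)]
    (NC : Finset (Fin n)) (hNC : ∀ i, i ∈ NC ↔ ¬ ∀ x y : S i, x * y = y * x) :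
    (3 ≤ NC.card ∨ (2 ≤ NC.card ∧ ∃ i ∈ NC, ∃ a b, (commGraph (S i)).Adj a b) →
      (commGraph (ZeroUnion S)).egirth = 3) ∧
    (NC.card = 2 ∧ (∀ i ∈ NC, ∀ a b, ¬ (commGraph (S i)).Adj a b) →
      (commGraph (ZeroUnion S)).egirth = 4) := by
  rw [← ZeroUnion.commGraphIso.egirth_eq]
  have vertex_mem : ∀ x : Σ i, {a : S i // a ∉ sgCenter (S i)}, x.1 ∈ NC :=
    fun x => (hNC x.1).2 fun h => x.2.2 (h x.2)
  have vertices (i : Fin n) (hi : i ∈ NC) :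
      ∃ a b : {a : S i // a ∉ sgCenter (S i)}, a ≠ b :=
    (nontrivial_notMem_sgCenter ((hNC i).1 hi)).exists_pair_ne
  refine ⟨?_, ?_⟩
  · rintro (h3 | ⟨h2, i, hi, a, a', ha⟩)
    · obtain ⟨i, hi, j, hj, k, hk, hij, hik, hjk⟩ := Finset.two_lt_card.1 h3
      obtain ⟨a, -⟩ := vertices i hi
      obtain ⟨b, -⟩ := vertices j hj
      obtain ⟨c, -⟩ := vertices k hk
      exact egirth_graphJoinFam_of_ne hij hjk hik.symm a b c
    · obtain ⟨j, hj, hji⟩ := Finset.exists_mem_ne h2 i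
      obtain ⟨b, -⟩ := vertices j hj
      exact egirth_graphJoinFam_of_adj ha hji.symm b
  · rintro ⟨h2, hG⟩
    obtain ⟨i, j, hij, rfl⟩ := Finset.card_eq_two.1 h2
    obtain ⟨a, a', ha⟩ := vertices i (by simp)
    obtain ⟨b, b', hb⟩ := vertices j (by simp)
    exact egirth_graphJoinFam_of_forall_not_adj hij ha hb
      (fun k u => hG k (vertex_mem ⟨k, u⟩) u) (fun x => by simpa using vertex_mem x)

theorem egirth_commGraph_zeroUnion {n : ℕ} (S : Fin n → Type*)
    [∀ i, Semigroup (S i)] [∀ i, Fintype (S i)] [∀ i, Nonempty (S i)]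
    (NC : Finset (Fin n)) (hNC : ∀ i, i ∈ NC ↔ ¬ ∀ x y : S i, x * y = y * x) :
    (3 ≤ NC.card ∨ (2 ≤ NC.card ∧ ∃ i ∈ NC, ∃ a b, (commGraph (S i)).Adj a b) →
      (commGraph (ZeroUnion S)).egirth = 3) ∧
    (NC.card = 2 ∧ (∀ i ∈ NC, ∀ a b, ¬ (commGraph (S i)).Adj a b) →
      (commGraph (ZeroUnion S)).egirth = 4) :=
  egirth_commGraph_zeroUnion_general S NC hNC
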